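/- arXiv:1008.0740 — 2 statements merged into one kernel-verified Lean document; each statement's English description precedes it below -/
import Mathlib

section
/- Let p₀, p₁ > 0 and define f : ℝ³ → ℝ by f(x) = (|x₁|^{p₀} + (|x₂|^{p₁} + |x₃|^{p₁})^{p₀/p₁})^{1/p₀}. Then the Lebesgue volume of the set {x ∈ ℝ³ : f(x) ≤ 1} equals (2³/3) · (Γ(1/p₁)²/(p₁ Γ(2/p₁))) · (Γ(1/p₀) Γ(2/p₀)/(p₀ Γ(3/p₀))). -/
open Real MeasureTheory

open Set Pointwise

lemma real_beta {a b : ℝ} (ha : 0 < a) (hb : 0 < b) :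
    ∫ x in (0:ℝ)..1, x ^ (a - 1) * (1 - x) ^ (b - 1) =
      Real.Gamma a * Real.Gamma b / Real.Gamma (a + b) := by
  have h := Complex.Gamma_mul_Gamma_eq_betaIntegral (s := (a:ℂ)) (t := (b:ℂ))
    (by simpa using ha) (by simpa using hb)
  have hβ : Complex.betaIntegral a b =
      ((∫ x in (0:ℝ)..1, x ^ (a - 1) * (1 - x) ^ (b - 1) : ℝ) : ℂ) := by
    rw [Complex.betaIntegral, ← intervalIntegral.integral_ofReal]
    refine intervalIntegral.integral_congr fun x hx => ?_
    rw [Set.uIcc_of_le zero_le_one] at hx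
    rw [show ((a:ℂ) - 1) = ((a - 1 : ℝ) : ℂ) by push_cast; ring,
      show ((b:ℂ) - 1) = ((b - 1 : ℝ) : ℂ) by push_cast; ring,
      show (1 - (x:ℂ)) = ((1 - x : ℝ) : ℂ) by push_cast; ring,
      ← Complex.ofReal_cpow hx.1, ← Complex.ofReal_cpow (by linarith [hx.2]),
      ← Complex.ofReal_mul]
  rw [hβ, show ((a:ℂ) + b) = ((a + b : ℝ) : ℂ) by push_cast; ring,
    Complex.Gamma_ofReal, Complex.Gamma_ofReal, Complex.Gamma_ofReal,
    ← Complex.ofReal_mul, ← Complex.ofReal_mul, Complex.ofReal_inj] at h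
  have hG : Real.Gamma (a + b) ≠ 0 := (Real.Gamma_pos_of_pos (by linarith)).ne'
  rw [eq_div_iff hG, mul_comm _ (Real.Gamma (a+b)), ← h]

lemma Jlem {p q : ℝ} (hp : 0 < p) (hq : 0 < q) :
    ∫ t in Set.Ioo (0:ℝ) 1, (1 - t ^ p) ^ q =
      1 / p * (Real.Gamma (1 / p) * Real.Gamma (q + 1) / Real.Gamma (1 / p + q + 1)) := by
  set g : ℝ → ℝ := Set.indicator (Set.Ioo 0 1)
    (fun u => 1 / p * (u ^ (1 / p - 1) * (1 - u) ^ q)) with hg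
  have key := integral_comp_rpow_Ioi g hp.ne'
  have h1 : ∀ x ∈ Ioi (0:ℝ),
      (|p| * x ^ (p - 1)) • g (x ^ p) =
        Set.indicator (Set.Ioo 0 1) (fun t => (1 - t ^ p) ^ q) x := by
    intro x hx
    have hx0 : (0:ℝ) < x := hx
    have hmem : x ^ p ∈ Ioo (0:ℝ) 1 ↔ x ∈ Ioo (0:ℝ) 1 := by
      constructor
      · rintro ⟨h1', h2'⟩
        refine ⟨hx0, ?_⟩
        by_contra hle
        push_neg at hle
        exact absurd h2' (not_lt.mpr (Real.one_le_rpow hle hp.le))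
      · rintro ⟨h1', h2'⟩
        exact ⟨Real.rpow_pos_of_pos hx0 p, Real.rpow_lt_one hx0.le h2' hp⟩
    by_cases hxm : x ∈ Ioo (0:ℝ) 1
    · rw [Set.indicator_of_mem hxm, hg, Set.indicator_of_mem (hmem.mpr hxm)]
      have : (x ^ p) ^ (1 / p - 1) = x ^ (p * (1 / p - 1)) := (Real.rpow_mul hx0.le _ _).symm
      rw [smul_eq_mul, this, abs_of_pos hp]
      have hxne : x ≠ 0 := hx0.ne'
      rw [show p * (1 / p - 1) = 1 - p by field_simp]
      rw [← mul_assoc, ← mul_assoc, show p * (x ^ (p-1)) * (1/p) = x ^ (p-1) * (p * (1/p)) by ring,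
        mul_one_div_cancel hp.ne', mul_one, ← Real.rpow_add hx0, sub_add_sub_cancel, sub_self,
        Real.rpow_zero, one_mul]
    · rw [Set.indicator_of_notMem hxm, hg, Set.indicator_of_notMem (fun h => hxm (hmem.mp h)),
        smul_zero]
  rw [setIntegral_congr_fun measurableSet_Ioi h1] at key
  rw [MeasureTheory.integral_indicator measurableSet_Ioo, Measure.restrict_restrict measurableSet_Ioo,
    Set.inter_eq_self_of_subset_left (Set.Ioo_subset_Ioi_self)] at key
  rw [hg, MeasureTheory.integral_indicator measurableSet_Ioo, Measure.restrict_restrict measurableSet_Ioo,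
    Set.inter_eq_self_of_subset_left (Set.Ioo_subset_Ioi_self)] at key
  rw [key, integral_const_mul]
  congr 1
  have := real_beta (a := 1/p) (b := q + 1) (by positivity) (by linarith)
  rw [intervalIntegral.integral_of_le zero_le_one, MeasureTheory.integral_Ioc_eq_integral_Ioo] at this
  simp only [add_sub_cancel_right] at this
  rw [this]
  ring_nf

lemma even_int (f : ℝ → ℝ) :
    ∫ t in Ioo (-1:ℝ) 1, f |t| = 2 * ∫ t in Ioo (0:ℝ) 1, f t := by
  have h1 : ∀ t : ℝ, Set.indicator (Ioo (-1:ℝ) 1) (fun t => f |t|) t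
      = Set.indicator (Ico (0:ℝ) 1) f |t| := by
    intro t
    by_cases ht : t ∈ Ioo (-1:ℝ) 1
    · rw [Set.indicator_of_mem ht, Set.indicator_of_mem]
      exact ⟨abs_nonneg t, abs_lt.mpr ⟨ht.1, ht.2⟩⟩
    · rw [Set.indicator_of_notMem ht, Set.indicator_of_notMem]
      intro hmem
      exact ht ⟨neg_lt_of_abs_lt hmem.2, lt_of_abs_lt hmem.2⟩
  rw [← MeasureTheory.integral_indicator measurableSet_Ioo]
  simp_rw [h1]
  rw [integral_comp_abs (f := Set.indicator (Ico (0:ℝ) 1) f),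
    MeasureTheory.integral_indicator measurableSet_Ico,
    Measure.restrict_restrict measurableSet_Ico,
    show Ico (0:ℝ) 1 ∩ Ioi 0 = Ioo 0 1 by ext u; simp [and_comm, and_assoc]; intros; linarith]

lemma vol_interval (c : ℝ) :
    volume {z : Fin 1 → ℝ | |z 0| ≤ c} = ENNReal.ofReal (2 * c) := by
  have h : {z : Fin 1 → ℝ | |z 0| ≤ c} =
      MeasurableEquiv.funUnique (Fin 1) ℝ ⁻¹' Icc (-c) c := by
    ext z
    simp [MeasurableEquiv.funUnique, abs_le]
  rw [h]
  erw [(volume_preserving_funUnique (Fin 1) ℝ).measure_preimage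
    measurableSet_Icc.nullMeasurableSet, Real.volume_Icc]
  congr 1
  ring

lemma vol_ball2 {p₁ : ℝ} (hp₁ : 0 < p₁) :
    volume {y : Fin 2 → ℝ | |y 0| ^ p₁ + |y 1| ^ p₁ ≤ 1} =
      ENNReal.ofReal (2 * Real.Gamma (1 / p₁) ^ 2 / (p₁ * Real.Gamma (2 / p₁))) := by
  have hcont : Continuous fun z : ℝ × (Fin 1 → ℝ) => |z.1| ^ p₁ + |z.2 0| ^ p₁ :=
    (continuous_fst.abs.rpow_const fun _ => Or.inr hp₁.le).add
      (((continuous_apply 0).comp continuous_snd).abs.rpow_const fun _ => Or.inr hp₁.le)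
  set T : Set (ℝ × (Fin 1 → ℝ)) := {z | |z.1| ^ p₁ + |z.2 0| ^ p₁ ≤ 1} with hTdef
  have hT : MeasurableSet T := measurableSet_le hcont.measurable measurable_const
  have hset : {y : Fin 2 → ℝ | |y 0| ^ p₁ + |y 1| ^ p₁ ≤ 1}
      = MeasurableEquiv.piFinSuccAbove (fun _ : Fin 2 => ℝ) 0 ⁻¹' T := by
    ext y
    simp [hTdef, MeasurableEquiv.piFinSuccAbove, Fin.zero_succAbove, Fin.insertNthEquiv, Fin.tail, Fin.succ_zero_eq_one]
  rw [hset, (volume_preserving_piFinSuccAbove (fun _ : Fin 2 => ℝ) 0).measure_preimage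
    hT.nullMeasurableSet, Measure.volume_eq_prod, Measure.prod_apply hT]
  have hslice : ∀ t : ℝ, Prod.mk t ⁻¹' T = {z : Fin 1 → ℝ | |z 0| ^ p₁ ≤ 1 - |t| ^ p₁} := by
    intro t
    ext z
    simp only [hTdef, Set.mem_preimage, Set.mem_setOf_eq]
    constructor <;> intro h <;> linarith
  simp_rw [hslice]
  -- a.e. identification with an indicator
  have hnull : volume {t : ℝ | |t| = 1} = 0 := by
    refine measure_mono_null (fun t ht => ?_) (Set.Finite.measure_zero
      ((Set.finite_singleton (1:ℝ)).insert (-1)) volume)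
    rcases (abs_eq zero_le_one).mp ht with h | h
    · exact Set.mem_insert_of_mem _ (by simp [h])
    · simp [h]
  have hae : (fun t : ℝ => volume {z : Fin 1 → ℝ | |z 0| ^ p₁ ≤ 1 - |t| ^ p₁}) =ᵐ[volume]
      Set.indicator (Ioo (-1:ℝ) 1)
        (fun t => ENNReal.ofReal (2 * (1 - |t| ^ p₁) ^ (1 / p₁))) := by
    refine ae_iff.mpr (measure_mono_null (fun t ht => ?_) hnull)
    simp only [Set.mem_setOf_eq] at ht ⊢
    by_contra htne
    apply ht
    rcases lt_or_gt_of_ne htne with h | h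
    · -- |t| < 1
      have htm : t ∈ Ioo (-1:ℝ) 1 := by
        constructor <;> [linarith [neg_abs_le t]; linarith [le_abs_self t]]
      have hr : 0 < 1 - |t| ^ p₁ := by
        have := Real.rpow_lt_one (abs_nonneg t) h hp₁
        linarith
      have hpow : ((1 - |t| ^ p₁) ^ (1 / p₁)) ^ p₁ = 1 - |t| ^ p₁ := by
        rw [← Real.rpow_mul hr.le]
        field_simp
        exact Real.rpow_one _
      have hseteq : {z : Fin 1 → ℝ | |z 0| ^ p₁ ≤ 1 - |t| ^ p₁}
          = {z : Fin 1 → ℝ | |z 0| ≤ (1 - |t| ^ p₁) ^ (1 / p₁)} := by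
        ext z
        simp only [Set.mem_setOf_eq]
        constructor
        · intro hle
          have h2 := Real.rpow_le_rpow (Real.rpow_nonneg (abs_nonneg _) _) hle
            (le_of_lt (by positivity : (0:ℝ) < 1 / p₁))
          rwa [← Real.rpow_mul (abs_nonneg _), mul_one_div_cancel hp₁.ne',
            Real.rpow_one] at h2
        · intro hle
          have h2 := Real.rpow_le_rpow (abs_nonneg _) hle hp₁.le
          rwa [hpow] at h2
      rw [hseteq, vol_interval, Set.indicator_of_mem htm]
    · -- |t| > 1
      have htm : t ∉ Ioo (-1:ℝ) 1 := by
        intro hm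
        have : |t| < 1 := abs_lt.mpr ⟨hm.1, hm.2⟩
        linarith
      have hgt : 1 < |t| ^ p₁ :=
        (Real.one_lt_rpow_iff_of_pos (by linarith)).mpr (Or.inl ⟨h, hp₁⟩)
      have hempty : {z : Fin 1 → ℝ | |z 0| ^ p₁ ≤ 1 - |t| ^ p₁} = ∅ := by
        ext z
        simp only [Set.mem_setOf_eq, Set.mem_empty_iff_false, iff_false, not_le]
        have : (0:ℝ) ≤ |z 0| ^ p₁ := Real.rpow_nonneg (abs_nonneg _) _
        linarith
      rw [hempty, measure_empty, Set.indicator_of_notMem htm]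
  rw [lintegral_congr_ae hae, lintegral_indicator measurableSet_Ioo]
  have hc2 : Continuous fun t : ℝ => 2 * (1 - |t| ^ p₁) ^ (1 / p₁) :=
    continuous_const.mul (((continuous_const.sub
      (continuous_abs.rpow_const fun _ => Or.inr hp₁.le)).rpow_const
      fun _ => Or.inr (by positivity)))
  have hint : IntegrableOn (fun t : ℝ => 2 * (1 - |t| ^ p₁) ^ (1 / p₁)) (Ioo (-1) 1) :=
    (hc2.integrableOn_Icc (a := -1) (b := 1)).mono_set Ioo_subset_Icc_self
  have hnn : 0 ≤ᵐ[volume.restrict (Ioo (-1:ℝ) 1)]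
      fun t : ℝ => 2 * (1 - |t| ^ p₁) ^ (1 / p₁) := by
    filter_upwards [ae_restrict_mem measurableSet_Ioo] with t ht
    have h1 : |t| ≤ 1 := le_of_lt (abs_lt.mpr ⟨ht.1, ht.2⟩)
    have : 0 ≤ 1 - |t| ^ p₁ := by
      have := Real.rpow_le_one (abs_nonneg t) h1 hp₁.le
      linarith
    positivity
  rw [← ofReal_integral_eq_lintegral_ofReal hint hnn, integral_const_mul,
    even_int fun u => (1 - u ^ p₁) ^ (1 / p₁), Jlem hp₁ (by positivity)]
  have hΓ2 : Real.Gamma (2 / p₁) ≠ 0 :=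
    (Real.Gamma_pos_of_pos (by positivity)).ne'
  rw [Real.Gamma_add_one (one_div_ne_zero hp₁.ne'),
    show 1 / p₁ + 1 / p₁ + 1 = 2 / p₁ + 1 by ring,
    Real.Gamma_add_one (by positivity : (2:ℝ)/p₁ ≠ 0)]
  congr 1
  field_simp

/-- The volume of the unit ball of the `L_p`-nested function
`f(x) = (|x₁|^{p₀} + (|x₂|^{p₁} + |x₃|^{p₁})^{p₀/p₁})^{1/p₀}` on `ℝ³`. -/
theorem lp_nested_ball_volume_dim3 (p₀ p₁ : ℝ) (hp₀ : 0 < p₀) (hp₁ : 0 < p₁) :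
    volume {x : Fin 3 → ℝ |
        (|x 0| ^ p₀ + (|x 1| ^ p₁ + |x 2| ^ p₁) ^ (p₀ / p₁)) ^ (1 / p₀) ≤ 1} =
      ENNReal.ofReal
        (2 ^ 3 / 3 * (Real.Gamma (1 / p₁) ^ 2 / (p₁ * Real.Gamma (2 / p₁))) *
          (Real.Gamma (1 / p₀) * Real.Gamma (2 / p₀) / (p₀ * Real.Gamma (3 / p₀)))) := by
  set v₂ : ℝ := 2 * Real.Gamma (1 / p₁) ^ 2 / (p₁ * Real.Gamma (2 / p₁)) with hv₂def
  have hΓ1 : 0 < Real.Gamma (1 / p₁) := Real.Gamma_pos_of_pos (by positivity)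
  have hΓ2 : 0 < Real.Gamma (2 / p₁) := Real.Gamma_pos_of_pos (by positivity)
  have hv₂ : 0 ≤ v₂ := by rw [hv₂def]; positivity
  -- drop the outer rpow
  have hdrop : {x : Fin 3 → ℝ |
        (|x 0| ^ p₀ + (|x 1| ^ p₁ + |x 2| ^ p₁) ^ (p₀ / p₁)) ^ (1 / p₀) ≤ 1}
      = {x : Fin 3 → ℝ |
        |x 0| ^ p₀ + (|x 1| ^ p₁ + |x 2| ^ p₁) ^ (p₀ / p₁) ≤ 1} := by
    ext x
    simp only [Set.mem_setOf_eq]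
    have ha : (0:ℝ) ≤ |x 0| ^ p₀ + (|x 1| ^ p₁ + |x 2| ^ p₁) ^ (p₀ / p₁) := by
      have h1 : (0:ℝ) ≤ |x 1| ^ p₁ + |x 2| ^ p₁ :=
        add_nonneg (Real.rpow_nonneg (abs_nonneg _) _) (Real.rpow_nonneg (abs_nonneg _) _)
      exact add_nonneg (Real.rpow_nonneg (abs_nonneg _) _) (Real.rpow_nonneg h1 _)
    constructor
    · intro h
      have h2 := Real.rpow_le_rpow (Real.rpow_nonneg ha _) h hp₀.le
      rwa [← Real.rpow_mul ha, one_div_mul_cancel hp₀.ne', Real.rpow_one,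
        Real.one_rpow] at h2
    · intro h
      exact Real.rpow_le_one ha h (by positivity)
  rw [hdrop]
  -- transfer to ℝ × (Fin 2 → ℝ)
  have hcontS : Continuous fun y : Fin 2 → ℝ => |y 0| ^ p₁ + |y 1| ^ p₁ :=
    ((continuous_apply 0).abs.rpow_const fun _ => Or.inr hp₁.le).add
      ((continuous_apply 1).abs.rpow_const fun _ => Or.inr hp₁.le)
  have hcont : Continuous fun z : ℝ × (Fin 2 → ℝ) =>
      |z.1| ^ p₀ + (|z.2 0| ^ p₁ + |z.2 1| ^ p₁) ^ (p₀ / p₁) :=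
    (continuous_fst.abs.rpow_const fun _ => Or.inr hp₀.le).add
      (((hcontS.comp continuous_snd)).rpow_const fun _ => Or.inr (by positivity))
  set T : Set (ℝ × (Fin 2 → ℝ)) :=
    {z | |z.1| ^ p₀ + (|z.2 0| ^ p₁ + |z.2 1| ^ p₁) ^ (p₀ / p₁) ≤ 1} with hTdef
  have hT : MeasurableSet T := measurableSet_le hcont.measurable measurable_const
  have hset : {x : Fin 3 → ℝ | |x 0| ^ p₀ + (|x 1| ^ p₁ + |x 2| ^ p₁) ^ (p₀ / p₁) ≤ 1}
      = MeasurableEquiv.piFinSuccAbove (fun _ : Fin 3 => ℝ) 0 ⁻¹' T := by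
    ext x
    simp [hTdef, MeasurableEquiv.piFinSuccAbove, Fin.zero_succAbove, Fin.insertNthEquiv,
      Fin.tail, Fin.succ_zero_eq_one]
  rw [hset, (volume_preserving_piFinSuccAbove (fun _ : Fin 3 => ℝ) 0).measure_preimage
    hT.nullMeasurableSet, Measure.volume_eq_prod, Measure.prod_apply hT]
  have hslice : ∀ t : ℝ, Prod.mk t ⁻¹' T
      = {y : Fin 2 → ℝ | (|y 0| ^ p₁ + |y 1| ^ p₁) ^ (p₀ / p₁) ≤ 1 - |t| ^ p₀} := by
    intro t
    ext y
    simp only [hTdef, Set.mem_preimage, Set.mem_setOf_eq]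
    constructor <;> intro h <;> linarith
  simp_rw [hslice]
  have hnull : volume {t : ℝ | |t| = 1} = 0 := by
    refine measure_mono_null (fun t ht => ?_) (Set.Finite.measure_zero
      ((Set.finite_singleton (1:ℝ)).insert (-1)) volume)
    rcases (abs_eq zero_le_one).mp ht with h | h
    · exact Set.mem_insert_of_mem _ (by simp [h])
    · simp [h]
  have hae : (fun t : ℝ =>
        volume {y : Fin 2 → ℝ | (|y 0| ^ p₁ + |y 1| ^ p₁) ^ (p₀ / p₁) ≤ 1 - |t| ^ p₀})
      =ᵐ[volume] Set.indicator (Ioo (-1:ℝ) 1)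
        (fun t => ENNReal.ofReal ((1 - |t| ^ p₀) ^ (2 / p₀) * v₂)) := by
    refine ae_iff.mpr (measure_mono_null (fun t ht => ?_) hnull)
    simp only [Set.mem_setOf_eq] at ht ⊢
    by_contra htne
    apply ht
    rcases lt_or_gt_of_ne htne with h | h
    · -- |t| < 1
      have htm : t ∈ Ioo (-1:ℝ) 1 := by
        constructor <;> [linarith [neg_abs_le t]; linarith [le_abs_self t]]
      have hr : 0 < 1 - |t| ^ p₀ := by
        have := Real.rpow_lt_one (abs_nonneg t) h hp₀
        linarith
      set r : ℝ := 1 - |t| ^ p₀ with hrdef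
      set c : ℝ := r ^ (1 / p₀) with hcdef
      have hc : 0 < c := Real.rpow_pos_of_pos hr _
      have hcp : c ^ p₁ = r ^ (p₁ / p₀) := by
        rw [hcdef, ← Real.rpow_mul hr.le]
        congr 1
        field_simp
      have hstepA : {y : Fin 2 → ℝ | (|y 0| ^ p₁ + |y 1| ^ p₁) ^ (p₀ / p₁) ≤ r}
          = {y : Fin 2 → ℝ | |y 0| ^ p₁ + |y 1| ^ p₁ ≤ c ^ p₁} := by
        ext y
        simp only [Set.mem_setOf_eq]
        have hS : (0:ℝ) ≤ |y 0| ^ p₁ + |y 1| ^ p₁ :=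
          add_nonneg (Real.rpow_nonneg (abs_nonneg _) _) (Real.rpow_nonneg (abs_nonneg _) _)
        rw [hcp]
        constructor
        · intro hle
          have h2 := Real.rpow_le_rpow (Real.rpow_nonneg hS _) hle
            (le_of_lt (by positivity : (0:ℝ) < p₁ / p₀))
          rwa [← Real.rpow_mul hS, div_mul_div_comm, mul_comm p₀ p₁,
            div_self (by positivity : p₁ * p₀ ≠ 0), Real.rpow_one] at h2
        · intro hle
          have h2 := Real.rpow_le_rpow hS hle (le_of_lt (by positivity : (0:ℝ) < p₀ / p₁))
          rwa [← Real.rpow_mul hr.le, div_mul_div_comm,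
            mul_comm p₁ p₀, div_self (by positivity : p₀ * p₁ ≠ 0), Real.rpow_one] at h2
      have hstepB : {y : Fin 2 → ℝ | |y 0| ^ p₁ + |y 1| ^ p₁ ≤ c ^ p₁}
          = (c • {y : Fin 2 → ℝ | |y 0| ^ p₁ + |y 1| ^ p₁ ≤ 1} : Set (Fin 2 → ℝ)) := by
        ext y
        rw [Set.mem_smul_set_iff_inv_smul_mem₀ hc.ne']
        simp only [Set.mem_setOf_eq, Pi.smul_apply, smul_eq_mul]
        rw [abs_mul, abs_mul, Real.mul_rpow (abs_nonneg _) (abs_nonneg _),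
          Real.mul_rpow (abs_nonneg _) (abs_nonneg _), abs_inv, abs_of_pos hc,
          Real.inv_rpow hc.le, ← mul_add,
          inv_mul_le_iff₀ (Real.rpow_pos_of_pos hc _), mul_one]
      rw [hstepA, hstepB, Measure.addHaar_smul_of_nonneg volume hc.le, vol_ball2 hp₁,
        Set.indicator_of_mem htm, ← hv₂def]
      rw [← ENNReal.ofReal_mul (by positivity)]
      congr 2
      rw [show Module.finrank ℝ (Fin 2 → ℝ) = 2 by
        simp [Module.finrank_fintype_fun_eq_card]]
      rw [hcdef, ← Real.rpow_natCast (r ^ (1/p₀)) 2, ← Real.rpow_mul hr.le,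
        show 1 / p₀ * (2:ℕ) = 2 / p₀ by push_cast; ring]
    · -- |t| > 1
      have htm : t ∉ Ioo (-1:ℝ) 1 := by
        intro hm
        have : |t| < 1 := abs_lt.mpr ⟨hm.1, hm.2⟩
        linarith
      have hgt : 1 < |t| ^ p₀ :=
        (Real.one_lt_rpow_iff_of_pos (by linarith)).mpr (Or.inl ⟨h, hp₀⟩)
      have hempty : {y : Fin 2 → ℝ | (|y 0| ^ p₁ + |y 1| ^ p₁) ^ (p₀ / p₁) ≤ 1 - |t| ^ p₀}
          = ∅ := by
        ext y
        simp only [Set.mem_setOf_eq, Set.mem_empty_iff_false, iff_false, not_le]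
        have hS : (0:ℝ) ≤ |y 0| ^ p₁ + |y 1| ^ p₁ :=
          add_nonneg (Real.rpow_nonneg (abs_nonneg _) _) (Real.rpow_nonneg (abs_nonneg _) _)
        have : (0:ℝ) ≤ (|y 0| ^ p₁ + |y 1| ^ p₁) ^ (p₀ / p₁) := Real.rpow_nonneg hS _
        linarith
      rw [hempty, measure_empty, Set.indicator_of_notMem htm]
  rw [lintegral_congr_ae hae, lintegral_indicator measurableSet_Ioo]
  have hc2 : Continuous fun t : ℝ => (1 - |t| ^ p₀) ^ (2 / p₀) * v₂ :=
    (((continuous_const.sub (continuous_abs.rpow_const fun _ => Or.inr hp₀.le)).rpow_const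
      fun _ => Or.inr (by positivity))).mul continuous_const
  have hint : IntegrableOn (fun t : ℝ => (1 - |t| ^ p₀) ^ (2 / p₀) * v₂) (Ioo (-1) 1) :=
    (hc2.integrableOn_Icc (a := -1) (b := 1)).mono_set Ioo_subset_Icc_self
  have hnn : 0 ≤ᵐ[volume.restrict (Ioo (-1:ℝ) 1)]
      fun t : ℝ => (1 - |t| ^ p₀) ^ (2 / p₀) * v₂ := by
    filter_upwards [ae_restrict_mem measurableSet_Ioo] with t ht
    have h1 : |t| ≤ 1 := le_of_lt (abs_lt.mpr ⟨ht.1, ht.2⟩)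
    have h2 : 0 ≤ 1 - |t| ^ p₀ := by
      have := Real.rpow_le_one (abs_nonneg t) h1 hp₀.le
      linarith
    have := Real.rpow_nonneg h2 (2 / p₀)
    positivity
  rw [← ofReal_integral_eq_lintegral_ofReal hint hnn, integral_mul_const,
    even_int fun u => (1 - u ^ p₀) ^ (2 / p₀), Jlem hp₀ (by positivity)]
  have hΓ3 : Real.Gamma (3 / p₀) ≠ 0 := (Real.Gamma_pos_of_pos (by positivity)).ne'
  rw [Real.Gamma_add_one (by positivity : (2:ℝ)/p₀ ≠ 0),
    show 1 / p₀ + 2 / p₀ + 1 = 3 / p₀ + 1 by ring,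
    Real.Gamma_add_one (by positivity : (3:ℝ)/p₀ ≠ 0)]
  congr 1
  rw [hv₂def]
  field_simp
end

section
/- Let X ∈ ℝⁿ have a density of the form ρ(‖x‖_p) for some p > 0 with independent coordinates X₁,…,Xₙ. Then X follows a p-generalized Normal distribution, i.e., its density is proportional to exp(−τ ∑ᵢ |xᵢ|^p) for some τ > 0. -/
open Real MeasureTheory
open Pointwise in
private lemma nat_mul_of_add (u : ℝ → ℝ)
    (hadd : ∀ s t : ℝ, 0 ≤ s → 0 ≤ t → u (s + t) = u s + u t) :
    ∀ x : ℝ, 0 ≤ x → ∀ m : ℕ, u (m * x) = m * u x := by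
  have h0 : u 0 = 0 := by have := hadd 0 0 le_rfl le_rfl; simp at this; linarith
  intro x hx m
  induction m with
  | zero => simp [h0]
  | succ k ih =>
    have : ((k:ℝ)+1) * x = k * x + x := by ring
    rw [Nat.cast_succ, this, hadd _ _ (by positivity) hx, ih]; ring

open Pointwise in
/-- The measurable Cauchy functional equation on the half line. -/
private lemma cauchy_halfline (u : ℝ → ℝ) (hu : Measurable u)
    (hadd : ∀ s t : ℝ, 0 ≤ s → 0 ≤ t → u (s + t) = u s + u t) :
    ∃ c : ℝ, ∀ x : ℝ, 0 ≤ x → u x = c * x := by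
  have h0 : u 0 = 0 := by have := hadd 0 0 le_rfl le_rfl; simp at this; linarith
  -- find a positive-measure set where u is bounded
  obtain ⟨k, hk⟩ : ∃ k : ℕ, 0 < volume (Set.Icc (0:ℝ) 1 ∩ u ⁻¹' Set.Icc (-(k:ℝ)) k) := by
    by_contra hcon
    push_neg at hcon
    have hnull : volume (⋃ k : ℕ, Set.Icc (0:ℝ) 1 ∩ u ⁻¹' Set.Icc (-(k:ℝ)) k) = 0 :=
      measure_iUnion_null fun k => le_antisymm (hcon k) zero_le
    have hsub : Set.Icc (0:ℝ) 1 ⊆ ⋃ k : ℕ, Set.Icc (0:ℝ) 1 ∩ u ⁻¹' Set.Icc (-(k:ℝ)) k := by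
      intro x hx
      obtain ⟨k, hk⟩ := exists_nat_ge |u x|
      exact Set.mem_iUnion.2 ⟨k, hx, by
        rw [Set.mem_preimage, Set.mem_Icc, ← abs_le]; exact hk⟩
    have := measure_mono_null hsub hnull
    simp [Real.volume_Icc] at this
  set A := Set.Icc (0:ℝ) 1 ∩ u ⁻¹' Set.Icc (-(k:ℝ)) k with hA
  have hAmeas : MeasurableSet A := measurableSet_Icc.inter (hu measurableSet_Icc)
  have hAA : A - A ∈ nhds (0:ℝ) :=
    MeasureTheory.Measure.sub_mem_nhds_zero_of_addHaar_pos volume A hAmeas hk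
  obtain ⟨δ, hδpos, hδ⟩ := Metric.mem_nhds_iff.1 hAA
  rw [Real.ball_eq_Ioo] at hδ
  -- u is bounded by 2k on [0, δ)
  have hbdd : ∀ x : ℝ, 0 ≤ x → x < δ → |u x| ≤ 2 * k := by
    intro x hx hxδ
    have hxA : x ∈ A - A := hδ ⟨by linarith, by simpa using hxδ⟩
    obtain ⟨a, ha, b, hb, hab⟩ := Set.mem_sub.1 hxA
    have hbx : a = b + x := by linarith
    have hb0 : (0:ℝ) ≤ b := hb.1.1
    have hub : |u b| ≤ k := abs_le.2 ⟨by simpa using hb.2.1, hb.2.2⟩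
    have hua : |u a| ≤ k := abs_le.2 ⟨by simpa using ha.2.1, ha.2.2⟩
    have : u a = u b + u x := by rw [hbx]; exact hadd b x hb0 hx
    have : u x = u a - u b := by linarith
    rw [this]
    calc |u a - u b| ≤ |u a| + |u b| := abs_sub _ _
      _ ≤ 2 * k := by linarith
  set d := δ / 2 with hd
  have hdpos : 0 < d := by positivity
  set c := u d / d with hc
  set v := fun x => u x - c * x with hv
  have hvadd : ∀ s t : ℝ, 0 ≤ s → 0 ≤ t → v (s + t) = v s + v t := by
    intro s t hs ht; simp only [hv, hadd s t hs ht]; ring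
  have hvd : v d = 0 := by
    simp only [hv, hc]; field_simp; ring
  have hB : ∀ x : ℝ, 0 ≤ x → x ≤ d → |v x| ≤ 2 * k + |c| * d := by
    intro x hx hxd
    have h1 : |u x| ≤ 2 * k := hbdd x hx (by rw [hd] at hxd; linarith)
    have h2 : |c * x| ≤ |c| * d := by
      rw [abs_mul]
      exact mul_le_mul_of_nonneg_left (by rwa [abs_of_nonneg hx]) (abs_nonneg c)
    calc |v x| = |u x - c * x| := rfl
      _ ≤ |u x| + |c * x| := abs_sub _ _
      _ ≤ 2 * k + |c| * d := by linarith
  set B := 2 * (k:ℝ) + |c| * d with hBdef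
  -- v is d-periodic on [0,∞)
  have hper : ∀ m : ℕ, ∀ x : ℝ, 0 ≤ x → v (x + m * d) = v x := by
    intro m
    induction m with
    | zero => intro x hx; simp
    | succ j ih =>
      intro x hx
      have : x + ((j:ℝ)+1) * d = (x + j * d) + d := by ring
      rw [Nat.cast_succ, this, hvadd _ _ (by positivity) hdpos.le, hvd, add_zero, ih x hx]
  have hglob : ∀ x : ℝ, 0 ≤ x → |v x| ≤ B := by
    intro x hx
    set m := ⌊x / d⌋₊ with hm
    have hmle : (m:ℝ) * d ≤ x := by
      rw [hm]
      have := Nat.floor_le (by positivity : (0:ℝ) ≤ x / d)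
      calc (⌊x/d⌋₊ : ℝ) * d ≤ (x / d) * d := by nlinarith
        _ = x := by field_simp
    have hmlt : x < ((m:ℝ) + 1) * d := by
      have := Nat.lt_floor_add_one (x / d)
      calc x = (x / d) * d := by field_simp
        _ < ((m:ℝ)+1) * d := by nlinarith
    have hr0 : 0 ≤ x - m * d := by linarith
    have hrd : x - m * d ≤ d := by nlinarith
    have := hper m (x - m * d) hr0
    rw [show x - (m:ℝ) * d + m * d = x by ring] at this
    rw [this]
    exact hB _ hr0 hrd
  have hvzero : ∀ x : ℝ, 0 ≤ x → v x = 0 := by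
    intro x hx
    by_contra hne
    have hpos : 0 < |v x| := abs_pos.2 hne
    obtain ⟨m, hm⟩ := exists_nat_gt (B / |v x|)
    have hm1 : B < m * |v x| := by
      rw [div_lt_iff₀ hpos] at hm; linarith
    have : v ((m:ℝ) * x) = m * v x := nat_mul_of_add v hvadd x hx m
    have hmb := hglob ((m:ℝ) * x) (by positivity)
    rw [this, abs_mul, Nat.abs_cast] at hmb
    linarith
  exact ⟨c, fun x hx => by have := hvzero x hx; simp only [hv] at this; linarith⟩

/-- If an `L_p`-spherically symmetric probability density `x ↦ ρ(‖x‖_p)` on `ℝⁿ`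
has independent coordinates (i.e. factorizes as a product over coordinates),
then it is a `p`-generalized Normal density, i.e. proportional to
`exp(-τ ∑ᵢ |xᵢ|^p)` for some `τ > 0`. -/
theorem factorial_lp_spherical_is_pgen_normal (n : ℕ) (hn : 2 ≤ n) (p : ℝ) (hp : 0 < p)
    (ρ : ℝ → ℝ) (hρmeas : Measurable ρ)
    (hnonneg : ∀ x : Fin n → ℝ, 0 ≤ ρ ((∑ i, |x i| ^ p) ^ (1 / p)))
    (hint : ∫ x : Fin n → ℝ, ρ ((∑ i, |x i| ^ p) ^ (1 / p)) = 1)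
    (h : Fin n → ℝ → ℝ)
    (hfact : ∀ x : Fin n → ℝ,
      ρ ((∑ i, |x i| ^ p) ^ (1 / p)) = ∏ i, h i (x i)) :
    ∃ τ > (0 : ℝ), ∃ C : ℝ,
      ∀ x : Fin n → ℝ,
        ρ ((∑ i, |x i| ^ p) ^ (1 / p)) = C * Real.exp (-τ * ∑ i, |x i| ^ p) := by
  have hp' : p ≠ 0 := hp.ne'
  set i0 : Fin n := ⟨0, by omega⟩ with hi0
  set i1 : Fin n := ⟨1, by omega⟩ with hi1
  have hi01 : i0 ≠ i1 := by rw [hi0, hi1]; simp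
  set e : ℝ → ℝ → (Fin n → ℝ) := fun a b i => if i = i0 then a else if i = i1 then b else 0
    with he
  -- the sum of the |·|^p over e a b
  have hsum : ∀ a b : ℝ, ∑ i, |e a b i| ^ p = |a| ^ p + |b| ^ p := by
    intro a b
    have key : ∀ i : Fin n, |e a b i| ^ p =
        (if i = i0 then |a| ^ p else 0) + (if i = i1 then |b| ^ p else 0) := by
      intro i
      simp only [he]
      by_cases h1 : i = i0
      · simp [h1, hi01, Ne.symm hi01]
      · by_cases h2 : i = i1
        · simp [h1, h2, Ne.symm hi01]
        · simp [h1, h2, Real.zero_rpow hp']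
    rw [Finset.sum_congr rfl fun i _ => key i, Finset.sum_add_distrib]
    simp
  -- the factorization of the product over e a b
  set K : ℝ := ∏ i ∈ (Finset.univ.erase i0).erase i1, h i 0 with hK
  have hprod : ∀ a b : ℝ, ∏ i, h i (e a b i) = h i0 a * h i1 b * K := by
    intro a b
    rw [← Finset.mul_prod_erase Finset.univ _ (Finset.mem_univ i0),
        ← Finset.mul_prod_erase _ _
          (Finset.mem_erase.2 ⟨Ne.symm hi01, Finset.mem_univ i1⟩)]
    have key : ∀ i ∈ (Finset.univ.erase i0).erase i1, h i (e a b i) = h i 0 := by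
      intro i hi
      have hne1 : i ≠ i1 := (Finset.mem_erase.1 hi).1
      have hne0 : i ≠ i0 := (Finset.mem_erase.1 (Finset.mem_erase.1 hi).2).1
      simp [he, hne0, hne1]
    rw [Finset.prod_congr rfl key]
    have e0 : e a b i0 = a := by simp [he]
    have e1 : e a b i1 = b := by simp [he, Ne.symm hi01]
    rw [e0, e1]
    ring
  -- the key two-point identity
  have hQ : ∀ a b : ℝ, ρ ((|a| ^ p + |b| ^ p) ^ (1 / p)) = h i0 a * h i1 b * K := by
    intro a b
    rw [← hsum a b, hfact (e a b), hprod]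
  have hrpow : ∀ t : ℝ, 0 ≤ t → |t ^ (1/p)| ^ p = t := by
    intro t ht
    rw [abs_of_nonneg (Real.rpow_nonneg ht _), ← Real.rpow_mul ht, one_div,
      inv_mul_cancel₀ hp', Real.rpow_one]
  set G : ℝ → ℝ := fun t => ρ (t ^ (1/p)) with hGdef
  have hGt : ∀ s t : ℝ, 0 ≤ s → 0 ≤ t →
      G (s + t) = h i0 (s ^ (1/p)) * h i1 (t ^ (1/p)) * K := by
    intro s t hs ht
    have := hQ (s ^ (1/p)) (t ^ (1/p))
    rwa [hrpow s hs, hrpow t ht] at this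
  -- the multiplicative functional equation
  have hG : ∀ s t : ℝ, 0 ≤ s → 0 ≤ t → G (s + t) * G 0 = G s * G t := by
    intro s t hs ht
    have h1 := hGt s t hs ht
    have h2 := hGt s 0 hs le_rfl
    have h3 := hGt 0 t le_rfl ht
    have h4 := hGt 0 0 le_rfl le_rfl
    rw [add_zero] at h2
    rw [zero_add] at h3
    rw [add_zero] at h4
    rw [h1, h2, h3, h4]; ring
  -- nonnegativity of G on [0,∞)
  have hGnonneg : ∀ t : ℝ, 0 ≤ t → 0 ≤ G t := by
    intro t ht
    have := hnonneg (e (t ^ (1/p)) 0)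
    rwa [hsum, hrpow t ht, abs_zero, Real.zero_rpow hp', add_zero] at this
  have hSnonneg : ∀ x : Fin n → ℝ, 0 ≤ ∑ i, |x i| ^ p := by
    intro x
    exact Finset.sum_nonneg fun i _ => Real.rpow_nonneg (abs_nonneg _) _
  -- rewrite the density through G
  have hFG : ∀ x : Fin n → ℝ, ρ ((∑ i, |x i| ^ p) ^ (1 / p)) = G (∑ i, |x i| ^ p) :=
    fun x => rfl
  -- G 0 > 0
  have hG0 : 0 < G 0 := by
    rcases (hGnonneg 0 le_rfl).lt_or_eq with hlt | heq
    · exact hlt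
    · exfalso
      have hzero : ∀ s : ℝ, 0 ≤ s → G s = 0 := by
        intro s hs
        have h1 := hG s s hs hs
        rw [← heq, mul_zero] at h1
        exact mul_self_eq_zero.1 h1.symm
      have h2 : ∫ x : Fin n → ℝ, ρ ((∑ i, |x i| ^ p) ^ (1 / p)) = 0 := by
        have h3 : (fun x : Fin n → ℝ => ρ ((∑ i, |x i| ^ p) ^ (1 / p))) = fun _ => (0:ℝ) :=
          funext fun x => by rw [hFG x, hzero _ (hSnonneg x)]
        rw [h3, integral_zero]
      rw [hint] at h2
      exact one_ne_zero h2
  -- G > 0 on [0,∞)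
  have hGpos : ∀ t : ℝ, 0 ≤ t → 0 < G t := by
    intro t ht
    rcases (hGnonneg t ht).lt_or_eq with hlt | heq
    · exact hlt
    · exfalso
      have ha : G t = 0 := heq.symm
      have ht0 : t ≠ 0 := fun h0 => by rw [h0] at ha; exact hG0.ne' ha
      have htpos : 0 < t := lt_of_le_of_ne ht (Ne.symm ht0)
      have hhalf : ∀ s : ℝ, 0 ≤ s → G s = 0 → G (s / 2) = 0 := by
        intro s hs hGs
        have h1 := hG (s/2) (s/2) (by linarith) (by linarith)
        rw [show s/2 + s/2 = s by ring, hGs, zero_mul] at h1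
        exact mul_self_eq_zero.1 h1.symm
      have hpow : ∀ m : ℕ, G (t / 2 ^ m) = 0 := by
        intro m
        induction m with
        | zero => simpa using ha
        | succ j ih =>
          have h1 : t / 2 ^ (j+1) = (t / 2 ^ j) / 2 := by ring
          rw [h1]
          exact hhalf _ (by positivity) ih
      have hshift : ∀ b s : ℝ, 0 ≤ b → 0 ≤ s → G b = 0 → G (b + s) = 0 := by
        intro b s hb hs hGb
        have h1 := hG b s hb hs
        rw [hGb, zero_mul] at h1
        exact (mul_eq_zero.1 h1).resolve_right hG0.ne'
      have hallzero : ∀ s : ℝ, 0 < s → G s = 0 := by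
        intro s hs
        obtain ⟨m, hm⟩ := exists_nat_gt (t / s)
        have h2m : (m:ℝ) < 2 ^ m := by exact_mod_cast (Nat.lt_two_pow_self (n := m))
        have hle : t / 2 ^ m ≤ s := by
          rw [div_le_iff₀ (by positivity)]
          have : t / s < 2 ^ m := lt_trans hm h2m
          rw [div_lt_iff₀ hs] at this
          nlinarith
        have := hshift (t / 2 ^ m) (s - t / 2 ^ m) (by positivity) (by linarith) (hpow m)
        rwa [show t / 2 ^ m + (s - t / 2 ^ m) = s by ring] at this
      -- the density vanishes away from the origin
      have hsupp : ∀ x : Fin n → ℝ, x ≠ 0 → ρ ((∑ i, |x i| ^ p) ^ (1 / p)) = 0 := by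
        intro x hx
        rw [hFG]
        apply hallzero
        obtain ⟨i, hi⟩ := Function.ne_iff.1 hx
        have h1 : 0 < |x i| ^ p := Real.rpow_pos_of_pos (abs_pos.2 hi) p
        exact lt_of_lt_of_le h1 (Finset.single_le_sum
          (fun j _ => Real.rpow_nonneg (abs_nonneg _) _) (Finset.mem_univ i))
      have h0vol : volume ({(0 : Fin n → ℝ)} : Set (Fin n → ℝ)) = 0 := by
        have hset : ({0} : Set (Fin n → ℝ)) = Set.pi Set.univ (fun _ => ({0} : Set ℝ)) := by
          ext x; simp [funext_iff]
        rw [hset, volume_pi_pi]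
        simp only [Real.volume_singleton, Finset.prod_const, Finset.card_univ,
          Fintype.card_fin]
        exact zero_pow (by omega)
      have hae : (fun x : Fin n → ℝ => ρ ((∑ i, |x i| ^ p) ^ (1 / p)))
          =ᵐ[volume] fun _ => (0:ℝ) := by
        rw [Filter.EventuallyEq, ae_iff]
        refine measure_mono_null ?_ h0vol
        intro x hx
        simp only [Set.mem_setOf_eq] at hx
        by_contra hne
        exact hx (hsupp x fun h0 => hne (by simp [h0]))
      have h2 := integral_congr_ae hae
      rw [hint, integral_zero] at h2
      exact one_ne_zero h2
  -- pass to the logarithm and solve the Cauchy equation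
  have hGmeas : Measurable G :=
    hρmeas.comp (Real.continuous_rpow_const (by positivity)).measurable
  set u : ℝ → ℝ := fun t => Real.log (G t) - Real.log (G 0) with hu
  have humeas : Measurable u := (Real.measurable_log.comp hGmeas).sub measurable_const
  have huadd : ∀ s t : ℝ, 0 ≤ s → 0 ≤ t → u (s + t) = u s + u t := by
    intro s t hs ht
    have hGst : G (s + t) = G s * G t / G 0 := by
      rw [eq_div_iff hG0.ne']; exact hG s t hs ht
    simp only [hu]
    rw [hGst, Real.log_div (mul_ne_zero (hGpos s hs).ne' (hGpos t ht).ne') hG0.ne',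
      Real.log_mul (hGpos s hs).ne' (hGpos t ht).ne']
    ring
  obtain ⟨c, hc⟩ := cauchy_halfline u humeas huadd
  have hGexp : ∀ t : ℝ, 0 ≤ t → G t = G 0 * Real.exp (c * t) := by
    intro t ht
    have h1 := hc t ht
    simp only [hu] at h1
    have h2 : Real.log (G t) = c * t + Real.log (G 0) := by linarith
    calc G t = Real.exp (Real.log (G t)) := (Real.exp_log (hGpos t ht)).symm
      _ = Real.exp (c * t + Real.log (G 0)) := by rw [h2]
      _ = G 0 * Real.exp (c * t) := by rw [Real.exp_add, Real.exp_log hG0]; ring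
  refine ⟨-c, ?_, G 0, fun x => by rw [hFG, hGexp _ (hSnonneg x), neg_neg]⟩
  -- it remains to show that c < 0, using integrability
  by_contra hcon
  push_neg at hcon
  have hc0 : 0 ≤ c := by linarith
  have hlow : ∀ x : Fin n → ℝ, G 0 ≤ ρ ((∑ i, |x i| ^ p) ^ (1 / p)) := by
    intro x
    rw [hFG, hGexp _ (hSnonneg x)]
    nlinarith [Real.one_le_exp (mul_nonneg hc0 (hSnonneg x)), hG0]
  have hvoluniv : (volume : Measure (Fin n → ℝ)) Set.univ = ⊤ := by
    rw [volume_pi, Measure.pi_univ]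
    simp only [Real.volume_univ, Finset.prod_const, Finset.card_univ, Fintype.card_fin]
    exact ENNReal.top_pow (by omega)
  by_cases hInt : Integrable (fun x : Fin n → ℝ => ρ ((∑ i, |x i| ^ p) ^ (1 / p)))
  · have hconst : Integrable (fun _ : Fin n → ℝ => G 0) := by
      refine hInt.mono aestronglyMeasurable_const (Filter.Eventually.of_forall fun x => ?_)
      rw [Real.norm_eq_abs, Real.norm_eq_abs, abs_of_pos hG0, abs_of_nonneg (hnonneg x)]
      exact hlow x
    rcases (integrable_const_iff).1 hconst with h1 | h1
    · exact hG0.ne' h1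
    · have h1 := h1.measure_univ_lt_top
      rw [hvoluniv] at h1
      exact (lt_irrefl _ h1)
  · rw [integral_undef hInt] at hint
    exact zero_ne_one hint
end
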